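/- The elements z, e1^l, e3^l and w^l are central in B, i.e., each of them commutes with each of the generators e1, e3, z and w. -/
import Mathlib


noncomputable section

open MulOpposite

/-- The defining relations of the "good" subalgebra `B` of `U_q^+(B_2)`, on the free algebra
on generators `e1 = ι 0`, `e3 = ι 1`, `z = ι 2`, `w = ι 3`
(where `w = e2·e3 + z/(q^2-1)` inside `U_q^+(B_2)`). -/
inductive BqRel (K : Type*) [Field K] (q : K) :
    FreeAlgebra K (Fin 4) → FreeAlgebra K (Fin 4) → Prop
  | e1e3 : BqRel K q (FreeAlgebra.ι K 0 * FreeAlgebra.ι K 1)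
      (q⁻¹ ^ 2 • (FreeAlgebra.ι K 1 * FreeAlgebra.ι K 0))
  | e1z : BqRel K q (FreeAlgebra.ι K 0 * FreeAlgebra.ι K 2)
      (FreeAlgebra.ι K 2 * FreeAlgebra.ι K 0)
  | e3z : BqRel K q (FreeAlgebra.ι K 1 * FreeAlgebra.ι K 2)
      (FreeAlgebra.ι K 2 * FreeAlgebra.ι K 1)
  | wz : BqRel K q (FreeAlgebra.ι K 3 * FreeAlgebra.ι K 2)
      (FreeAlgebra.ι K 2 * FreeAlgebra.ι K 3)
  | we3 : BqRel K q (FreeAlgebra.ι K 3 * FreeAlgebra.ι K 1)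
      (q ^ 2 • (FreeAlgebra.ι K 1 * FreeAlgebra.ι K 3))
  | we1 : BqRel K q (FreeAlgebra.ι K 3 * FreeAlgebra.ι K 0)
      (FreeAlgebra.ι K 0 * FreeAlgebra.ι K 3 - FreeAlgebra.ι K 1 ^ 2)

/-- The algebra `B`, presented by generators `e1, e3, z, w` and the relations above. -/
abbrev Bq (K : Type*) [Field K] (q : K) : Type _ := RingQuot (BqRel K q)

variable (K : Type*) [Field K] (q : K)

/-- The generator `e1` of `B`. -/
def Be1 : Bq K q := RingQuot.mkAlgHom K (BqRel K q) (FreeAlgebra.ι K 0)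
/-- The generator `e3` of `B`. -/
def Be3 : Bq K q := RingQuot.mkAlgHom K (BqRel K q) (FreeAlgebra.ι K 1)
/-- The generator `z` of `B`. -/
def Bz : Bq K q := RingQuot.mkAlgHom K (BqRel K q) (FreeAlgebra.ι K 2)
/-- The generator `w` of `B`. -/
def Bw : Bq K q := RingQuot.mkAlgHom K (BqRel K q) (FreeAlgebra.ι K 3)


lemma r13 : Be1 K q * Be3 K q = q⁻¹ ^ 2 • (Be3 K q * Be1 K q) := by
  rw [Be1, Be3, ← map_mul, ← map_mul, ← map_smul]
  exact RingQuot.mkAlgHom_rel K BqRel.e1e3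

lemma r1z : Be1 K q * Bz K q = Bz K q * Be1 K q := by
  rw [Be1, Bz, ← map_mul, ← map_mul]
  exact RingQuot.mkAlgHom_rel K BqRel.e1z

lemma r3z : Be3 K q * Bz K q = Bz K q * Be3 K q := by
  rw [Be3, Bz, ← map_mul, ← map_mul]
  exact RingQuot.mkAlgHom_rel K BqRel.e3z

lemma rwz : Bw K q * Bz K q = Bz K q * Bw K q := by
  rw [Bw, Bz, ← map_mul, ← map_mul]
  exact RingQuot.mkAlgHom_rel K BqRel.wz

lemma rw3 : Bw K q * Be3 K q = q ^ 2 • (Be3 K q * Bw K q) := by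
  rw [Bw, Be3, ← map_mul, ← map_mul, ← map_smul]
  exact RingQuot.mkAlgHom_rel K BqRel.we3

lemma rw1 : Bw K q * Be1 K q = Be1 K q * Bw K q - Be3 K q ^ 2 := by
  rw [Bw, Be1, Be3, ← map_pow, ← map_mul, ← map_mul, ← map_sub]
  exact RingQuot.mkAlgHom_rel K BqRel.we1

lemma r31 (hq0 : q ≠ 0) : Be3 K q * Be1 K q = q ^ 2 • (Be1 K q * Be3 K q) := by
  rw [r13, smul_smul, show q ^ 2 * q⁻¹ ^ 2 = 1 by field_simp, one_smul]

lemma Bq_pow_left_comm {A : Type*} [Semiring A] [Algebra K A] {x y : A} {c : K}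
    (h : x * y = c • (y * x)) (n : ℕ) : x ^ n * y = c ^ n • (y * x ^ n) := by
  induction n with
  | zero => simp
  | succ n ih =>
    rw [pow_succ, mul_assoc, h, mul_smul_comm, ← mul_assoc, ih, smul_mul_assoc, smul_smul,
      mul_assoc, ← pow_succ, ← pow_succ']

lemma Bq_pow_right_comm {A : Type*} [Semiring A] [Algebra K A] {x y : A} {c : K}
    (h : x * y = c • (y * x)) (n : ℕ) : x * y ^ n = c ^ n • (y ^ n * x) := by
  induction n with
  | zero => simp
  | succ n ih =>
    rw [pow_succ', ← mul_assoc, h, smul_mul_assoc, mul_assoc, ih, mul_smul_comm, smul_smul,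
      ← mul_assoc, ← pow_succ', ← pow_succ']

/-- The elements `z, e1^l, e3^l` and `w^l` are central in `B`,
i.e. each of them commutes with each of the generators `e1, e3, z, w`. -/
theorem stmt6 (m : ℕ) (hm : 5 ≤ m) (hq : IsPrimitiveRoot q m)
    (l : ℕ) (hl : l = if Odd m then m else m / 2) :
    ∀ c ∈ ({Bz K q, Be1 K q ^ l, Be3 K q ^ l, Bw K q ^ l} : Set (Bq K q)),
      ∀ g ∈ ({Be1 K q, Be3 K q, Bz K q, Bw K q} : Set (Bq K q)),
        Commute c g := by
  have hq0 : q ≠ 0 := hq.ne_zero (by omega)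
  have h2l : (q ^ 2) ^ l = 1 := by
    rw [← pow_mul]
    by_cases hodd : Odd m
    · rw [hl, if_pos hodd, mul_comm, pow_mul, hq.pow_eq_one, one_pow]
    · rw [hl, if_neg hodd, Nat.mul_div_cancel' (Nat.not_odd_iff_even.mp hodd).two_dvd,
        hq.pow_eq_one]
  have hc1l : (q⁻¹ ^ 2) ^ l = 1 := by
    rw [inv_pow, inv_pow, h2l, inv_one]
  have h4 : q ^ 4 ≠ 1 := hq.pow_ne_one_of_pos_of_lt (by norm_num) (by omega)
  have hζ2ne : ((q ^ 2) ^ 2 : K) ≠ 1 := by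
    rw [show ((q ^ 2) ^ 2 : K) = q ^ 4 by ring]; exact h4
  have hζ1ne : ((q⁻¹ ^ 2) ^ 2 : K) ≠ 1 := by
    rw [show ((q⁻¹ ^ 2) ^ 2 : K) = (q ^ 4)⁻¹ by rw [← pow_mul, inv_pow], Ne, inv_eq_one]
    exact h4
  have hζ2l : (((q ^ 2) ^ 2 : K)) ^ l = 1 := by
    rw [← pow_mul, mul_comm, pow_mul, h2l, one_pow]
  have hζ1l : (((q⁻¹ ^ 2) ^ 2 : K)) ^ l = 1 := by
    rw [← pow_mul, mul_comm, pow_mul, hc1l, one_pow]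
  have hs1 : (∑ j ∈ Finset.range l, ((q⁻¹ ^ 2) ^ 2 : K) ^ j) = 0 := by
    rw [geom_sum_eq hζ1ne, hζ1l, sub_self, zero_div]
  have hs2 : (∑ j ∈ Finset.range l, ((q ^ 2) ^ 2 : K) ^ j) = 0 := by
    rw [geom_sum_eq hζ2ne, hζ2l, sub_self, zero_div]
  have h1e32 : Be1 K q * Be3 K q ^ 2 = ((q⁻¹ ^ 2) ^ 2) • (Be3 K q ^ 2 * Be1 K q) :=
    Bq_pow_right_comm K (r13 K q) 2
  have hwe32 : Bw K q * Be3 K q ^ 2 = ((q ^ 2) ^ 2) • (Be3 K q ^ 2 * Bw K q) :=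
    Bq_pow_right_comm K (rw3 K q) 2
  have hApow : ∀ k : ℕ, Bw K q * Be1 K q ^ (k + 1) =
      Be1 K q ^ (k + 1) * Bw K q -
        (∑ j ∈ Finset.range (k + 1), ((q⁻¹ ^ 2) ^ 2 : K) ^ j) • (Be3 K q ^ 2 * Be1 K q ^ k) := by
    intro k
    induction k with
    | zero => simpa using rw1 K q
    | succ k ih =>
      have e1 : Bw K q * Be1 K q ^ (k + 1 + 1) =
          Be1 K q ^ (k + 1) * (Bw K q * Be1 K q) -
            (∑ j ∈ Finset.range (k + 1), ((q⁻¹ ^ 2) ^ 2 : K) ^ j) •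
              (Be3 K q ^ 2 * Be1 K q ^ (k + 1)) := by
        rw [pow_succ, ← mul_assoc, ih, sub_mul, smul_mul_assoc, mul_assoc, mul_assoc,
          ← pow_succ]
      rw [e1, rw1, mul_sub, ← mul_assoc, ← pow_succ, Bq_pow_left_comm K h1e32 (k + 1)]
      conv_rhs => rw [Finset.sum_range_succ]
      module
  have hBpow : ∀ k : ℕ, Bw K q ^ (k + 1) * Be1 K q =
      Be1 K q * Bw K q ^ (k + 1) -
        (∑ j ∈ Finset.range (k + 1), ((q ^ 2) ^ 2 : K) ^ j) • (Be3 K q ^ 2 * Bw K q ^ k) := by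
    intro k
    induction k with
    | zero => simpa using rw1 K q
    | succ k ih =>
      have e1 : Bw K q ^ (k + 1 + 1) * Be1 K q =
          (Bw K q * Be1 K q) * Bw K q ^ (k + 1) -
            (∑ j ∈ Finset.range (k + 1), ((q ^ 2) ^ 2 : K) ^ j) •
              ((Bw K q * Be3 K q ^ 2) * Bw K q ^ k) := by
        rw [pow_succ', mul_assoc, ih, mul_sub, mul_smul_comm, ← mul_assoc, ← mul_assoc]
      rw [e1, rw1, hwe32, sub_mul, smul_mul_assoc, mul_assoc, mul_assoc, ← pow_succ',
        ← pow_succ']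
      conv_rhs => rw [geom_sum_succ]
      module
  have hlpos : 0 < l := by rw [hl]; split <;> omega
  obtain ⟨n, rfl⟩ : ∃ n, l = n + 1 := ⟨l - 1, by omega⟩
  have hA : Bw K q * Be1 K q ^ (n + 1) = Be1 K q ^ (n + 1) * Bw K q := by
    rw [hApow n, hs1, zero_smul, sub_zero]
  have hB : Bw K q ^ (n + 1) * Be1 K q = Be1 K q * Bw K q ^ (n + 1) := by
    rw [hBpow n, hs2, zero_smul, sub_zero]
  have H13 : Be1 K q ^ (n + 1) * Be3 K q = Be3 K q * Be1 K q ^ (n + 1) := by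
    rw [Bq_pow_left_comm K (r13 K q), hc1l, one_smul]
  have H31 : Be3 K q ^ (n + 1) * Be1 K q = Be1 K q * Be3 K q ^ (n + 1) := by
    rw [Bq_pow_left_comm K (r31 K q hq0), h2l, one_smul]
  have Hw3 : Bw K q ^ (n + 1) * Be3 K q = Be3 K q * Bw K q ^ (n + 1) := by
    rw [Bq_pow_left_comm K (rw3 K q), h2l, one_smul]
  have H3w : Bw K q * Be3 K q ^ (n + 1) = Be3 K q ^ (n + 1) * Bw K q := by
    rw [Bq_pow_right_comm K (rw3 K q), h2l, one_smul]
  have cz1 : Commute (Be1 K q) (Bz K q) := r1z K q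
  have cz3 : Commute (Be3 K q) (Bz K q) := r3z K q
  have czw : Commute (Bw K q) (Bz K q) := rwz K q
  intro c hc g hg
  simp only [Set.mem_insert_iff, Set.mem_singleton_iff] at hc hg
  rcases hc with rfl | rfl | rfl | rfl <;> rcases hg with rfl | rfl | rfl | rfl
  · exact cz1.symm
  · exact cz3.symm
  · exact Commute.refl _
  · exact czw.symm
  · exact (Commute.refl _).pow_left _
  · exact H13
  · exact cz1.pow_left _
  · exact hA.symm
  · exact H31
  · exact (Commute.refl _).pow_left _
  · exact cz3.pow_left _
  · exact H3w.symm
  · exact hB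
  · exact Hw3
  · exact czw.pow_left _
  · exact (Commute.refl _).pow_left _
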